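/- arXiv:1707.06698 — 2 statements merged into one kernel-verified Lean document; each statement's English description precedes it below -/
import Mathlib

section
/- For n ≥ 4, the minimum nonzero weight of a Steinhaus triangle of size n is n, and it is attained exactly by the three sequences: the all-ones sequence, the sequence (1,0,…,0), and the sequence (0,…,0,1). -/
/-- The derivative of a binary sequence: `(∂x)ᵢ = xᵢ + xᵢ₊₁`. -/
def der {n : ℕ} (x : Fin n → ZMod 2) : Fin (n - 1) → ZMod 2 :=
  fun i => x ⟨i.1, by have := i.2; omega⟩ + x ⟨i.1 + 1, by have := i.2; omega⟩

/-- The iterated derivative `∂ʲx : F₂^{n-j}`. -/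
def derIter {n : ℕ} (x : Fin n → ZMod 2) : (j : ℕ) → Fin (n - j) → ZMod 2
  | 0 => x
  | j + 1 => der (derIter x j)

/-- The weight (number of ones) of a binary sequence. -/
def wt {m : ℕ} (y : Fin m → ZMod 2) : ℕ :=
  (Finset.univ.filter fun i => y i = 1).card

/-- The weight of the Steinhaus triangle of `x`: the sum of the weights of all rows. -/
def tw {n : ℕ} (x : Fin n → ZMod 2) : ℕ :=
  ∑ j ∈ Finset.range n, wt (derIter x j)

/-- The standard basis vector `e k` with a single one in position `k`. -/
def e (n k : ℕ) : Fin n → ZMod 2 := fun i => if i.1 = k then 1 else 0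

/-!
Let `r` be the last nonzero row of the triangle of `x ≠ 0`. Its derivative vanishes, so it is the
all-ones row of length `n - r`, and each of the `r` rows above it has weight at least one; hence
`|T(x)| ≥ r + (n - r) = n`. In case of equality all rows above row `r` have weight one. For `r = 0`,
`x` is the all-ones sequence. For `r = 1`, `x = e k` and `∂x` is the all-ones row of length
`n - 1 ≥ 3`, impossible since `∂(e k)` has ones only at `k - 1` and `k`. For `r ≥ 2`, both `x` and
`∂x` are unit vectors, which forces the one of `x` to sit at an end.
-/

lemma ZMod.two_ne_one_iff {a : ZMod 2} : a ≠ 1 ↔ a = 0 := by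
  revert a; decide

lemma funext_of_eq_one_iff {m : ℕ} {y z : Fin m → ZMod 2} (h : ∀ i, y i = 1 ↔ z i = 1) :
    y = z := by
  funext i
  by_cases hy : y i = 1
  · rw [hy, ((h i).1 hy)]
  · rw [ZMod.two_ne_one_iff.1 hy, ZMod.two_ne_one_iff.1 ((h i).not.1 hy)]

lemma wt_eq_zero_iff {m : ℕ} {y : Fin m → ZMod 2} : wt y = 0 ↔ y = 0 := by
  simp [wt, funext_iff, ZMod.two_ne_one_iff]

lemma one_le_wt {m : ℕ} {y : Fin m → ZMod 2} (hy : y ≠ 0) : 1 ≤ wt y :=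
  Nat.one_le_iff_ne_zero.2 (wt_eq_zero_iff.not.2 hy)

lemma wt_const_one (m : ℕ) : wt (fun _ : Fin m => (1 : ZMod 2)) = m := by
  simp [wt]

lemma e_apply_eq_one_iff {m k : ℕ} (i : Fin m) : e m k i = 1 ↔ (i : ℕ) = k := by
  unfold e; split_ifs with h <;> simp [h]

lemma wt_e {m k : ℕ} (hk : k < m) : wt (e m k) = 1 := by
  rw [wt, Finset.card_eq_one]
  exact ⟨⟨k, hk⟩, by ext i; simp [e_apply_eq_one_iff, Fin.ext_iff]⟩

lemma exists_eq_e_of_wt_eq_one {m : ℕ} {y : Fin m → ZMod 2} (hy : wt y = 1) :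
    ∃ k < m, y = e m k := by
  obtain ⟨a, ha⟩ := Finset.card_eq_one.1 hy
  refine ⟨a, a.2, funext_of_eq_one_iff fun i => ?_⟩
  simpa [e_apply_eq_one_iff, Fin.ext_iff] using Finset.ext_iff.1 ha i

lemma der_zero {m : ℕ} : der (0 : Fin m → ZMod 2) = 0 := by
  funext _; exact add_zero 0

lemma der_const_one {m : ℕ} : der (fun _ : Fin m => (1 : ZMod 2)) = 0 := by
  funext _; exact CharTwo.add_self_eq_zero 1

lemma eq_const_one_of_der_eq_zero {m : ℕ} {y : Fin m → ZMod 2} (hy : y ≠ 0) (hd : der y = 0) :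
    y = fun _ => 1 := by
  have hsucc (k : ℕ) (hk : k + 1 < m) : y ⟨k + 1, hk⟩ = y ⟨k, by omega⟩ := by
    have h : y ⟨k, _⟩ + y ⟨k + 1, hk⟩ = 0 := congrFun hd ⟨k, by omega⟩
    rw [eq_neg_of_add_eq_zero_right h, ZMod.neg_eq_self_mod_two]
  have hzero (k : ℕ) (hk : k < m) : y ⟨k, hk⟩ = y ⟨0, by omega⟩ := by
    induction k with
    | zero => rfl
    | succ k ih => rw [hsucc k hk, ih]
  obtain ⟨j, hj⟩ := Function.ne_iff.1 hy
  funext i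
  rw [hzero i i.2, ← hzero j j.2]
  by_contra h1
  exact hj (ZMod.two_ne_one_iff.1 h1)

lemma der_e_apply_eq_one_iff {m k : ℕ} (i : Fin (m - 1)) :
    der (e m k) i = 1 ↔ (i : ℕ) = k ∨ (i : ℕ) + 1 = k := by
  simp only [der, e]
  split_ifs <;> simp_all

lemma der_e_zero (m : ℕ) : der (e m 0) = e (m - 1) 0 :=
  funext_of_eq_one_iff fun i => by simp [der_e_apply_eq_one_iff, e_apply_eq_one_iff]

lemma der_e_last (m : ℕ) : der (e m (m - 1)) = e (m - 1) (m - 2) :=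
  funext_of_eq_one_iff fun i => by
    simp only [der_e_apply_eq_one_iff, e_apply_eq_one_iff]
    omega

lemma der_e_ne_const_one {m : ℕ} (hm : 4 ≤ m) (k : ℕ) : der (e m k) ≠ fun _ => 1 := by
  intro h
  have h0 := (der_e_apply_eq_one_iff ⟨0, by omega⟩).1 (congrFun h _)
  have h2 := (der_e_apply_eq_one_iff ⟨2, by omega⟩).1 (congrFun h _)
  simp only at h0 h2
  omega

lemma eq_zero_or_eq_pred_of_der_e_eq_e {m k k' : ℕ} (hk : k < m)
    (h : der (e m k) = e (m - 1) k') : k = 0 ∨ k = m - 1 := by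
  by_contra! hint
  have hl : (k - 1 : ℕ) = k' := by
    rw [← e_apply_eq_one_iff (⟨k - 1, by omega⟩ : Fin (m - 1)), ← h, der_e_apply_eq_one_iff,
      Fin.val_mk]
    omega
  have hr : k = k' := by
    rw [← e_apply_eq_one_iff (⟨k, by omega⟩ : Fin (m - 1)), ← h, der_e_apply_eq_one_iff,
      Fin.val_mk]
    omega
  omega

section derIter

variable {n : ℕ} (x : Fin n → ZMod 2)

lemma derIter_self : derIter x n = 0 :=
  funext fun i => absurd i.2 (by omega)

variable {x}

lemma derIter_eq_zero_of_le {i j : ℕ} (hij : i ≤ j) (h : derIter x i = 0) :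
    derIter x j = 0 := by
  induction j, hij using Nat.le_induction with
  | base => exact h
  | succ j _ ih => rw [derIter, ih, der_zero]

lemma tw_eq_sum_range_of_derIter_eq_zero {r : ℕ} (hr : r ≤ n) (h : derIter x r = 0) :
    tw x = ∑ j ∈ Finset.range r, wt (derIter x j) := by
  rw [tw, ← Finset.sum_range_add_sum_Ico _ hr, add_eq_left]
  refine Finset.sum_eq_zero fun j hj => wt_eq_zero_iff.2 ?_
  exact derIter_eq_zero_of_le (Finset.mem_Ico.1 hj).1 h

lemma tw_eq_of_wt_derIter_eq_one (h : ∀ j < n, wt (derIter x j) = 1) : tw x = n := by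
  rw [tw, Finset.sum_congr rfl fun j hj => h j (Finset.mem_range.1 hj)]
  simp

lemma exists_tw_eq_sum_add (hx : x ≠ 0) :
    ∃ r < n, (∀ j < r, 1 ≤ wt (derIter x j)) ∧ derIter x r = (fun _ => 1) ∧
      tw x = ∑ j ∈ Finset.range r, wt (derIter x j) + (n - r) := by
  classical
  have hex : ∃ j, derIter x j = 0 := ⟨n, derIter_self x⟩
  have hvanish := Nat.find_spec hex
  obtain ⟨r, hr⟩ : ∃ r, Nat.find hex = r + 1 :=
    Nat.exists_eq_succ_of_ne_zero fun h0 => hx (by rwa [h0] at hvanish)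
  rw [hr] at hvanish
  have hne : ∀ j ≤ r, derIter x j ≠ 0 := fun j hj => Nat.find_min hex (by omega)
  have hrn : r < n := by
    by_contra! h
    exact hne n h (derIter_self x)
  have hrow : derIter x r = fun _ => 1 :=
    eq_const_one_of_der_eq_zero (hne r le_rfl) hvanish
  refine ⟨r, hrn, fun j hj => one_le_wt (hne j hj.le), hrow, ?_⟩
  rw [tw_eq_sum_range_of_derIter_eq_zero hrn hvanish, Finset.sum_range_succ,
    hrow, wt_const_one]

end derIter

lemma le_tw {n : ℕ} {x : Fin n → ZMod 2} (hx : x ≠ 0) : n ≤ tw x := by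
  obtain ⟨r, hrn, hpos, -, htw⟩ := exists_tw_eq_sum_add hx
  have hsum : r ≤ ∑ j ∈ Finset.range r, wt (derIter x j) := by
    simpa using Finset.card_nsmul_le_sum _ _ 1 fun j hj => hpos j (Finset.mem_range.1 hj)
  omega

lemma eq_of_tw_eq {n : ℕ} (hn : 4 ≤ n) {x : Fin n → ZMod 2} (hx : x ≠ 0) (h : tw x = n) :
    x = (fun _ => 1) ∨ x = e n 0 ∨ x = e n (n - 1) := by
  obtain ⟨r, hrn, hpos, hrow, htw⟩ := exists_tw_eq_sum_add hx
  have hones : ∀ j < r, wt (derIter x j) = 1 := by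
    have hsum : ∑ j ∈ Finset.range r, 1 = ∑ j ∈ Finset.range r, wt (derIter x j) := by
      simp only [Finset.sum_const, Finset.card_range, smul_eq_mul, mul_one]
      omega
    intro j hj
    exact ((Finset.sum_eq_sum_iff_of_le fun j hj => hpos j (Finset.mem_range.1 hj)).1 hsum
      j (Finset.mem_range.2 hj)).symm
  obtain rfl | hr := Nat.eq_zero_or_pos r
  · exact Or.inl hrow
  obtain ⟨k, hk, rfl⟩ := exists_eq_e_of_wt_eq_one (hones 0 hr)
  obtain rfl | hr1 := Nat.eq_or_lt_of_le hr
  · exact absurd hrow (der_e_ne_const_one hn k)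
  obtain ⟨k', -, hder⟩ := exists_eq_e_of_wt_eq_one (hones 1 hr1)
  rcases eq_zero_or_eq_pred_of_der_e_eq_e hk hder with rfl | rfl
  exacts [Or.inr (Or.inl rfl), Or.inr (Or.inr rfl)]

lemma tw_zero {n : ℕ} : tw (0 : Fin n → ZMod 2) = 0 := by
  simpa using tw_eq_sum_range_of_derIter_eq_zero (x := 0) (Nat.zero_le n) rfl

lemma tw_const_one {n : ℕ} (hn : 1 ≤ n) : tw (fun _ : Fin n => (1 : ZMod 2)) = n := by
  rw [tw_eq_sum_range_of_derIter_eq_zero (x := fun _ => 1) hn der_const_one, Finset.sum_range_one]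
  exact wt_const_one n

lemma derIter_e_zero (n j : ℕ) : derIter (e n 0) j = e (n - j) 0 := by
  induction j with
  | zero => rfl
  | succ j ih => rw [derIter, ih]; exact der_e_zero _

lemma derIter_e_last (n j : ℕ) : derIter (e n (n - 1)) j = e (n - j) (n - j - 1) := by
  induction j with
  | zero => rfl
  | succ j ih => rw [derIter, ih]; exact der_e_last _

lemma tw_e_zero (n : ℕ) : tw (e n 0) = n :=
  tw_eq_of_wt_derIter_eq_one fun j hj => by rw [derIter_e_zero]; exact wt_e (by omega)

lemma tw_e_last (n : ℕ) : tw (e n (n - 1)) = n :=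
  tw_eq_of_wt_derIter_eq_one fun j hj => by rw [derIter_e_last]; exact wt_e (by omega)

theorem stmt7 (n : ℕ) (hn : 4 ≤ n) :
    (∀ x : Fin n → ZMod 2, x ≠ 0 → n ≤ tw x) ∧
    (∀ x : Fin n → ZMod 2,
      tw x = n ↔ x = (fun _ => 1) ∨ x = e n 0 ∨ x = e n (n - 1)) := by
  refine ⟨fun x hx => le_tw hx, fun x => ⟨fun h => ?_, ?_⟩⟩
  · refine eq_of_tw_eq hn (fun hx => ?_) h
    rw [hx, tw_zero] at h
    omega
  · rintro (rfl | rfl | rfl)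
    exacts [tw_const_one (by omega), tw_e_zero n, tw_e_last n]
end

section
/- Let n ≥ 3 and let z₁, z₂, z₃ ∈ F₂ⁿ be the first n terms of the periodic sequences 110110110…, 011011011…, 101101101… respectively. If n ≡ 0 or 2 (mod 3), then |T(z₁)| = |T(z₂)| = |T(z₃)| = n(n+1)/3. If n ≡ 1 (mod 3), then |T(z₁)| = |T(z₃)| = (n-1)(n+2)/3 + 1 and |T(z₂)| = (n-1)(n+2)/3. -/
/-- `z₁` : first n terms of the periodic sequence `110110110…`. -/
def z1 (n : ℕ) : Fin n → ZMod 2 := fun i => if i.1 % 3 = 2 then 0 else 1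
/-- `z₂` : first n terms of the periodic sequence `011011011…`. -/
def z2 (n : ℕ) : Fin n → ZMod 2 := fun i => if i.1 % 3 = 0 then 0 else 1
/-- `z₃` : first n terms of the periodic sequence `101101101…`. -/
def z3 (n : ℕ) : Fin n → ZMod 2 := fun i => if i.1 % 3 = 1 then 0 else 1

lemma wt_eq_sum {m : ℕ} (y : Fin m → ZMod 2) :
    wt y = ∑ i, if y i = 1 then 1 else 0 := by
  rw [wt, Finset.card_filter]

lemma wt_w (K : ℕ) : ∀ m, wt (fun i : Fin m => if (i.1 + K) % 3 = 2 then (0:ZMod 2) else 1)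
    = m - (m + K % 3) / 3 := by
  intro m
  induction m with
  | zero => simp [wt]
  | succ m ih =>
    rw [wt_eq_sum, Fin.sum_univ_castSucc]
    have h1 : (∑ i : Fin m, if (if ((Fin.castSucc i).1 + K) % 3 = 2 then (0:ZMod 2) else 1) = 1 then 1 else 0)
        = wt (fun i : Fin m => if (i.1 + K) % 3 = 2 then (0:ZMod 2) else 1) := by
      rw [wt_eq_sum]
      exact Finset.sum_congr rfl fun i _ => rfl
    rw [h1, ih]
    simp only [Fin.val_last]
    by_cases hc : (m + K) % 3 = 2 <;> simp [hc] <;> omega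

lemma der_w (K m : ℕ) :
    der (fun i : Fin m => if (i.1 + K) % 3 = 2 then (0:ZMod 2) else 1)
    = fun i : Fin (m-1) => if (i.1 + (K + 2)) % 3 = 2 then (0:ZMod 2) else 1 := by
  funext i
  simp only [der]
  have h : (i.1 + K) % 3 = 0 ∨ (i.1 + K) % 3 = 1 ∨ (i.1 + K) % 3 = 2 := by omega
  rcases h with h | h | h
  · have hA : ¬ (i.1 + K) % 3 = 2 := by omega
    have hB : ¬ (i.1 + 1 + K) % 3 = 2 := by omega
    have hC : (i.1 + (K + 2)) % 3 = 2 := by omega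
    simp [hA, hB, hC]
    decide
  · have hA : ¬ (i.1 + K) % 3 = 2 := by omega
    have hB : (i.1 + 1 + K) % 3 = 2 := by omega
    have hC : ¬ (i.1 + (K + 2)) % 3 = 2 := by omega
    simp [hA, hB, hC]
  · have hB : ¬ (i.1 + 1 + K) % 3 = 2 := by omega
    have hC : ¬ (i.1 + (K + 2)) % 3 = 2 := by omega
    simp [h, hB, hC]

lemma derIter_w (K n : ℕ) : ∀ j, derIter (fun i : Fin n => if (i.1 + K) % 3 = 2 then (0:ZMod 2) else 1) j
    = fun i : Fin (n - j) => if (i.1 + (K + 2*j)) % 3 = 2 then (0:ZMod 2) else 1 := by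
  intro j
  induction j with
  | zero => funext i; simp [derIter]
  | succ j ih =>
    show der (derIter _ j) = _
    rw [ih, der_w]
    funext i
    have : i.1 + (K + 2*j + 2) = i.1 + (K + 2*(j+1)) := by ring
    rw [this]

def Asum (k n : ℕ) : ℕ := ∑ j ∈ Finset.range n, ((n - j) - ((n - j) + (k + 2*j) % 3) / 3)

lemma tw_w (K n : ℕ) :
    tw (fun i : Fin n => if (i.1 + K) % 3 = 2 then (0:ZMod 2) else 1) = Asum K n := by
  unfold tw Asum
  refine Finset.sum_congr rfl fun j _ => ?_
  rw [derIter_w, wt_w]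

lemma Asum_step (k : ℕ) (hk : k < 3) (n : ℕ) : Asum k (n+3) = Asum k n + (2*n+4) := by
  have e : n + 3 = n+1+1+1 := rfl
  unfold Asum
  rw [e, Finset.sum_range_succ', Finset.sum_range_succ', Finset.sum_range_succ']
  have hc : ∀ j ∈ Finset.range n,
      (n+1+1+1 - (j+1+1+1)) - ((n+1+1+1 - (j+1+1+1)) + (k+2*(j+1+1+1)) % 3) / 3
        = (n-j) - ((n-j) + (k+2*j) % 3) / 3 := by
    intro j _
    have c1 : n+1+1+1-(j+1+1+1) = n - j := by omega
    have c2 : (k+2*(j+1+1+1)) % 3 = (k+2*j) % 3 := by omega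
    rw [c1, c2]
  rw [Finset.sum_congr rfl hc]
  generalize (∑ j ∈ Finset.range n, ((n-j) - ((n-j) + (k+2*j) % 3) / 3)) = a
  interval_cases k <;> omega

lemma Asum_closed (k : ℕ) (hk : k < 3) : ∀ n,
    3 * Asum k n + (if n % 3 = 1 ∧ k = 2 then 2 else 0)
      = n*n + n + (if n % 3 = 1 ∧ k ≠ 2 then 1 else 0) := by
  intro n
  induction n using Nat.strong_induction_on with
  | _ n ih =>
    rcases lt_or_ge n 3 with h | h
    · interval_cases n <;> interval_cases k <;>
        norm_num [Asum, Finset.sum_range_succ]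
    · obtain ⟨m, rfl⟩ : ∃ m, n = m + 3 := ⟨n-3, by omega⟩
      have h1 := ih m (by omega)
      rw [Asum_step k hk m]
      have hmod : (m+3) % 3 = m % 3 := by omega
      rw [hmod]
      have hsq : (m+3)*(m+3) = m*m + 6*m + 9 := by ring
      rw [hsq]
      split_ifs at h1 ⊢ <;> omega


lemma tw_z1 (n : ℕ) : tw (z1 n) = Asum 0 n := by
  have hz : z1 n = fun i : Fin n => if (i.1 + 0) % 3 = 2 then (0:ZMod 2) else 1 := by
    funext i; simp [z1]
  rw [hz, tw_w]

lemma tw_z2 (n : ℕ) : tw (z2 n) = Asum 2 n := by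
  have hz : z2 n = fun i : Fin n => if (i.1 + 2) % 3 = 2 then (0:ZMod 2) else 1 := by
    funext i
    have h : (i.1 % 3 = 0) ↔ ((i.1 + 2) % 3 = 2) := by omega
    simp only [z2]
    by_cases hc : i.1 % 3 = 0
    · rw [if_pos hc, if_pos (h.mp hc)]
    · rw [if_neg hc, if_neg (fun hx => hc (h.mpr hx))]
  rw [hz, tw_w]

lemma tw_z3 (n : ℕ) : tw (z3 n) = Asum 1 n := by
  have hz : z3 n = fun i : Fin n => if (i.1 + 1) % 3 = 2 then (0:ZMod 2) else 1 := by
    funext i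
    have h : (i.1 % 3 = 1) ↔ ((i.1 + 1) % 3 = 2) := by omega
    simp only [z3]
    by_cases hc : i.1 % 3 = 1
    · rw [if_pos hc, if_pos (h.mp hc)]
    · rw [if_neg hc, if_neg (fun hx => hc (h.mpr hx))]
  rw [hz, tw_w]

theorem stmt16 (n : ℕ) (hn : 3 ≤ n) :
    (n % 3 = 0 ∨ n % 3 = 2 →
      tw (z1 n) = n * (n + 1) / 3 ∧ tw (z2 n) = n * (n + 1) / 3 ∧
      tw (z3 n) = n * (n + 1) / 3) ∧
    (n % 3 = 1 →
      tw (z1 n) = (n - 1) * (n + 2) / 3 + 1 ∧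
      tw (z3 n) = (n - 1) * (n + 2) / 3 + 1 ∧
      tw (z2 n) = (n - 1) * (n + 2) / 3) := by
  have c0 := Asum_closed 0 (by norm_num) n
  have c1 := Asum_closed 1 (by norm_num) n
  have c2 := Asum_closed 2 (by norm_num) n
  have hp1 : n * (n+1) = n*n + n := by ring
  have hp2 : (n-1) * (n+2) + 2 = n*n + n := by
    obtain ⟨m, rfl⟩ : ∃ m, n = m + 1 := ⟨n - 1, by omega⟩
    simp only [Nat.add_sub_cancel]
    ring
  rw [tw_z1, tw_z2, tw_z3]
  constructor
  · intro h
    have hne : ¬ (n % 3 = 1) := by omega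
    simp only [hne, false_and, if_false, ne_eq] at c0 c1 c2
    refine ⟨by omega, by omega, by omega⟩
  · intro h
    simp only [h, true_and, ne_eq, if_true] at c0 c1 c2
    norm_num at c0 c1 c2
    refine ⟨by omega, by omega, by omega⟩
end
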